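/- A strongly connected directed graph G with nonnegative arc costs is ξ-min-balanced if and only if for all nodes i and j, the bottleneck cost satisfies b(j,i) ≤ ξ·b(i,j), where b(i,j) is the minimum over all directed i–j paths P of the maximum arc cost on P. -/

import Mathlib

open scoped Classical

variable {V : Type*}

/-- `IsWalk A u v l`: `u :: l` is a directed walk from `u` to `v` in the digraph with
arc relation `A`. -/
def IsWalk (A : V → V → Prop) (u v : V) (l : List V) : Prop :=
  List.Chain A u l ∧ (u :: l).getLast (List.cons_ne_nil u l) = v

/-- The list of arcs of the walk `u :: l`. -/
def walkArcs (u : V) (l : List V) : List (V × V) := (u :: l).zip l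

/-- The cost of a walk: the sum of the costs of its arcs. -/
noncomputable def walkCost (c : V → V → ℝ) (u : V) (l : List V) : ℝ :=
  ((walkArcs u l).map fun e => c e.1 e.2).sum

/-- A (simple) directed cycle through the arc `(x, y)`: the arc `(x, y)` together with a
walk from `y` back to `x` visiting pairwise distinct nodes. -/
def IsCycleThrough (A : V → V → Prop) (x y : V) (l : List V) : Prop :=
  A x y ∧ IsWalk A y x l ∧ (y :: l).Nodup

/-- The arcs of the cycle through `(x, y)` given by the return walk `y :: l`. -/
def cycleArcs (x y : V) (l : List V) : List (V × V) := (x, y) :: walkArcs y l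

/-- `G = (V, A, c)` is `ξ`-min-balanced: every arc lies on a directed cycle all of whose
arcs have cost at most `ξ` times the cost of the given arc. -/
def MinBalanced (A : V → V → Prop) (c : V → V → ℝ) (ξ : ℝ) : Prop :=
  ∀ x y, A x y → ∃ l, IsCycleThrough A x y l ∧
    ∀ f ∈ cycleArcs x y l, c f.1 f.2 ≤ ξ * c x y

/-- A digraph is strongly connected if there is a directed walk between any two nodes. -/
def StronglyConnected (A : V → V → Prop) : Prop := ∀ u v : V, ∃ l, IsWalk A u v l

/-- The bottleneck cost `b(i,j)`: the least `t` such that there is a directed `i`–`j`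
walk all of whose arcs have cost at most `t`. -/
noncomputable def bottleneck (A : V → V → Prop) (c : V → V → ℝ) (i j : V) : ℝ :=
  sInf {t | ∃ l, IsWalk A i j l ∧ ∀ f ∈ walkArcs i l, c f.1 f.2 ≤ t}

/-- The balance value `β(e)` of the arc `e = (x, y)`: the smallest `r` such that there is
a directed cycle through `e` all of whose arcs have cost at most `r`. -/
noncomputable def balanceValue (A : V → V → Prop) (c : V → V → ℝ) (x y : V) : ℝ :=
  sInf {r | ∃ l, IsCycleThrough A x y l ∧ ∀ f ∈ cycleArcs x y l, c f.1 f.2 ≤ r}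

/-!
Write `G_t` for the subgraph of arcs of cost at most `t`. Then `b(i,j)` is the least `t` for
which `j` is reachable from `i` in `G_t`, and this least value is attained because `G_t` only
changes when `t` crosses one of the finitely many arc costs. If `G` is `ξ`-min-balanced, every
arc of `G_t` can be traversed backwards by a walk in `G_{ξt}`, so an `i`–`j` walk in
`G_{b(i,j)}` reverses into a `j`–`i` walk in `G_{ξ b(i,j)}`. Conversely, for an arc `(x,y)`,
`b(y,x) ≤ ξ b(x,y) ≤ ξ c(x,y)`, and a simple `y`–`x` path in `G_{ξ c(x,y)}` closes a cycle
through `(x,y)`.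
-/

open Relation

theorem Relation.ReflTransGen.reverse {α : Type*} {r p : α → α → Prop}
    (h : ∀ a b, r a b → ReflTransGen p b a) {a b : α} (hab : ReflTransGen r a b) :
    ReflTransGen p b a := by
  induction hab with
  | refl => exact .refl
  | tail _ hbc ih => exact (h _ _ hbc).trans ih

theorem Real.sInf_mem_sublevel {ι : Type*} [Finite ι] (f : ι → ℝ) {P : Set ι → Prop}
    (hP : Monotone P) (huniv : P Set.univ) :
    sInf {t | P {k | f k ≤ t}} ∈ {t | P {k | f k ≤ t}} := by
  set S := {t | P {k | f k ≤ t}}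
  by_cases hempty : P ∅
  · have hS : S = Set.univ := Set.eq_univ_of_forall fun t => hP (Set.empty_subset _) hempty
    rw [hS, Real.sInf_of_not_bddBelow not_bddBelow_univ]
    trivial
  -- a threshold in `S` can be lowered to the largest value of `f` below it
  have hlower : ∀ t ∈ S, ∃ k, f k ∈ S ∧ f k ≤ t := by
    intro t ht
    have hne : {k | f k ≤ t}.Nonempty :=
      Set.nonempty_iff_ne_empty.2 fun h => hempty (h ▸ ht)
    obtain ⟨k, hkt, hkmax⟩ := Set.exists_max_image _ f (Set.toFinite _) hne
    have hsame : {j | f j ≤ f k} = {j | f j ≤ t} :=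
      Set.ext fun j => ⟨fun (hj : f j ≤ f k) => hj.trans hkt, hkmax j⟩
    exact ⟨k, show P {j | f j ≤ f k} by rwa [hsame], hkt⟩
  obtain ⟨M, hM⟩ := (Set.finite_range f).bddAbove
  have hMS : M ∈ S := by
    have hall : {k | f k ≤ M} = Set.univ :=
      Set.eq_univ_of_forall fun k => hM (Set.mem_range_self k)
    exact show P {k | f k ≤ M} by rwa [hall]
  obtain ⟨k₀, hk₀S, -⟩ := hlower M hMS
  obtain ⟨m, hmS, hmmin⟩ :=
    Set.exists_min_image {k | f k ∈ S} f (Set.toFinite _) ⟨k₀, hk₀S⟩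
  have hleast : IsLeast S (f m) := ⟨hmS, fun t ht => by
    obtain ⟨k, hkS, hkt⟩ := hlower t ht
    exact (hmmin k hkS).trans hkt⟩
  rw [hleast.csInf_eq]
  exact hmS

/-- The arcs of `G_t`. -/
def sublevelArcs (A : V → V → Prop) (c : V → V → ℝ) (t : ℝ) (x y : V) : Prop :=
  A x y ∧ c x y ≤ t

theorem sublevelArcs_mono {A : V → V → Prop} {c : V → V → ℝ} :
    Monotone (sublevelArcs A c) :=
  fun _ _ hts _ _ h => ⟨h.1, h.2.trans hts⟩

section Walks

variable {A : V → V → Prop}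

theorem isWalk_nil_iff {u v : V} : IsWalk A u v [] ↔ u = v :=
  ⟨fun h => h.2, fun h => ⟨.singleton u, h⟩⟩

theorem isWalk_cons_iff {u v a : V} {l : List V} :
    IsWalk A u v (a :: l) ↔ A u a ∧ IsWalk A a v l := by
  change List.IsChain A (u :: a :: l) ∧ _ ↔ A u a ∧ List.IsChain A (a :: l) ∧ _
  rw [List.isChain_cons_cons, List.getLast_cons_cons, and_assoc]

theorem walkArcs_cons (u a : V) (l : List V) : walkArcs u (a :: l) = (u, a) :: walkArcs a l :=
  rfl

theorem exists_isWalk_iff_reflTransGen {u v : V} :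
    (∃ l, IsWalk A u v l) ↔ ReflTransGen A u v :=
  ⟨fun ⟨l, hchain, hlast⟩ => List.relationReflTransGen_of_exists_isChain_cons l hchain hlast,
    List.exists_isChain_cons_of_relationReflTransGen⟩

theorem isWalk_sublevelArcs_iff {c : V → V → ℝ} {t : ℝ} {u v : V} {l : List V} :
    IsWalk (sublevelArcs A c t) u v l ↔
      IsWalk A u v l ∧ ∀ f ∈ walkArcs u l, c f.1 f.2 ≤ t := by
  induction l generalizing u with
  | nil => simp [isWalk_nil_iff, walkArcs]
  | cons a l ih =>
    simp only [isWalk_cons_iff, ih, sublevelArcs, walkArcs_cons, List.forall_mem_cons]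
    tauto

theorem exists_isWalk_nodup_of_reflTransGen {u v : V} (h : ReflTransGen A u v) :
    ∃ l, IsWalk A u v l ∧ (u :: l).Nodup := by
  induction h using ReflTransGen.head_induction_on with
  | refl => exact ⟨[], isWalk_nil_iff.2 rfl, List.nodup_singleton _⟩
  | @head u w huw _ ih =>
    obtain ⟨l, hl, hnd⟩ := ih
    by_cases hu : u ∈ w :: l
    -- shortcut the walk at its visit to `u`
    · obtain ⟨p, s, hps⟩ := List.append_of_mem hu
      obtain ⟨hchain, hlast⟩ := hl
      change List.IsChain A (w :: l) at hchain
      rw [hps] at hchain hnd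
      simp only [hps, List.getLast_append_of_ne_nil _ (List.cons_ne_nil u s)] at hlast
      exact ⟨s, ⟨hchain.right_of_append, hlast⟩,
        hnd.sublist (List.sublist_append_right p _)⟩
    · exact ⟨w :: l, isWalk_cons_iff.2 ⟨huw, hl⟩, List.nodup_cons.2 ⟨hu, hnd⟩⟩

end Walks

section Bottleneck

variable {A : V → V → Prop} {c : V → V → ℝ}

theorem bottleneck_eq_sInf (i j : V) :
    bottleneck A c i j = sInf {t | ReflTransGen (sublevelArcs A c t) i j} := by
  unfold bottleneck
  congr 1
  ext t
  exact (exists_congr fun _ => isWalk_sublevelArcs_iff.symm).trans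
    exists_isWalk_iff_reflTransGen

theorem reflTransGen_sublevelArcs_bottleneck [Finite V] (hsc : StronglyConnected A) (i j : V) :
    ReflTransGen (sublevelArcs A c (bottleneck A c i j)) i j := by
  rw [bottleneck_eq_sInf]
  refine Real.sInf_mem_sublevel (fun p : V × V => c p.1 p.2)
    (P := fun L => ReflTransGen (fun x y => A x y ∧ (x, y) ∈ L) i j)
    (fun L L' hL => ReflTransGen.mono (fun x y hxy => ⟨hxy.1, hL hxy.2⟩) i j) ?_
  obtain ⟨l, hl⟩ := hsc i j
  exact ReflTransGen.mono (fun x y hxy => ⟨hxy, trivial⟩) i j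
    (exists_isWalk_iff_reflTransGen.1 ⟨l, hl⟩)

theorem bottleneck_le_of_reflTransGen {i j : V} {t : ℝ}
    (h : ReflTransGen (sublevelArcs A c t) i j) (ht : 0 ≤ t) : bottleneck A c i j ≤ t := by
  rw [bottleneck_eq_sInf]
  by_cases hB : BddBelow {t | ReflTransGen (sublevelArcs A c t) i j}
  · exact csInf_le hB h
  · rw [Real.sInf_of_not_bddBelow hB]
    exact ht

theorem bottleneck_nonneg (hc : ∀ x y, A x y → 0 ≤ c x y) (i j : V) :
    0 ≤ bottleneck A c i j := by
  rw [bottleneck_eq_sInf]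
  rcases eq_or_ne i j with rfl | hij
  · have hS : {t | ReflTransGen (sublevelArcs A c t) i i} = Set.univ :=
      Set.eq_univ_of_forall fun _ => ReflTransGen.refl
    rw [hS, Real.sInf_of_not_bddBelow not_bddBelow_univ]
  · refine Real.sInf_nonneg fun t ht => ?_
    obtain ⟨a, ⟨hia, hcost⟩, -⟩ := ht.cases_head.resolve_left hij
    exact (hc i a hia).trans hcost

end Bottleneck

/-- A strongly connected digraph with nonnegative arc costs is
`ξ`-min-balanced iff the bottleneck costs satisfy `b(j,i) ≤ ξ·b(i,j)` for all nodes. -/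
theorem minBalanced_iff_bottleneck [Fintype V] (A : V → V → Prop) (c : V → V → ℝ)
    (hc : ∀ x y, A x y → 0 ≤ c x y) (ξ : ℝ) (hξ : 1 ≤ ξ)
    (hsc : StronglyConnected A) :
    MinBalanced A c ξ ↔ ∀ i j : V, bottleneck A c j i ≤ ξ * bottleneck A c i j := by
  have hξ₀ : 0 ≤ ξ := zero_le_one.trans hξ
  constructor
  · intro hmb i j
    have hreturn : ∀ x y, sublevelArcs A c (bottleneck A c i j) x y →
        ReflTransGen (sublevelArcs A c (ξ * bottleneck A c i j)) y x := by
      rintro x y ⟨hxy, hcost⟩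
      obtain ⟨l, ⟨-, hl, -⟩, hcycle⟩ := hmb x y hxy
      refine exists_isWalk_iff_reflTransGen.1
        ⟨l, isWalk_sublevelArcs_iff.2 ⟨hl, fun f hf => ?_⟩⟩
      calc c f.1 f.2 ≤ ξ * c x y := hcycle f (List.mem_cons_of_mem _ hf)
        _ ≤ ξ * bottleneck A c i j := by gcongr
    exact bottleneck_le_of_reflTransGen
      ((reflTransGen_sublevelArcs_bottleneck hsc i j).reverse hreturn)
      (mul_nonneg hξ₀ (bottleneck_nonneg hc i j))
  · intro hb x y hxy
    have hxy_le : c x y ≤ ξ * c x y := le_mul_of_one_le_left (hc x y hxy) hξ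
    have hyx : bottleneck A c y x ≤ ξ * c x y := by
      refine (hb x y).trans (mul_le_mul_of_nonneg_left ?_ hξ₀)
      exact bottleneck_le_of_reflTransGen (.single ⟨hxy, le_rfl⟩) (hc x y hxy)
    obtain ⟨l, hl, hnd⟩ := exists_isWalk_nodup_of_reflTransGen
      (ReflTransGen.mono (sublevelArcs_mono hyx) y x
        (reflTransGen_sublevelArcs_bottleneck hsc y x))
    obtain ⟨hwalk, hcost⟩ := isWalk_sublevelArcs_iff.1 hl
    refine ⟨l, ⟨hxy, hwalk, hnd⟩, ?_⟩
    simpa only [cycleArcs, List.forall_mem_cons] using ⟨hxy_le, hcost⟩
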